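/- Let λ_1,...,λ_t be t distinct lines in P^2 such that each λ_i meets the other t−1 lines in t−1 distinct points (no three lines concurrent), and let C_t be the set of the binomial(t,2) pairwise intersection points. Then the first difference of the Hilbert function of C_t is (1, 2, 3, ..., t−1); in particular C_t lies on no curve of degree t−2, and C_t has generic Hilbert function. -/

import Mathlib

open MvPolynomial

noncomputable section

variable {k : Type} [Field k]

/-- The polynomial ring `k[x₀,x₁,x₂]`. -/
abbrev R3 (k : Type) [Field k] := MvPolynomial (Fin 3) k

/-- The ideal of polynomials vanishing on a set of affine representatives in `k³`. -/
def vIdeal (S : Set (Fin 3 → k)) : Ideal (R3 k) where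
  carrier := {f | ∀ x ∈ S, eval x f = 0}
  add_mem' := by intro a b ha hb x hx; simp [map_add, ha x hx, hb x hx]
  zero_mem' := by intro x _; simp
  smul_mem' := by intro c f hf x hx; simp [smul_eq_mul, map_mul, hf x hx]

/-- The (prime) ideal of the point of `ℙ²` with representative `p`. -/
def pointIdeal (p : Fin 3 → k) : Ideal (R3 k) := vIdeal {x | ∃ c : k, x = c • p}

/-- The radical (saturated) ideal of a finite set of points. -/
def radIdeal (X : Finset (Fin 3 → k)) : Ideal (R3 k) := ⨅ p ∈ X, pointIdeal p

/-- The saturated ideal of the first infinitesimal neighborhood (double point scheme). -/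
def dblIdeal (X : Finset (Fin 3 → k)) : Ideal (R3 k) := ⨅ p ∈ X, (pointIdeal p) ^ 2

/-- Hilbert function of `R/I` in degree `t`. -/
def hilb (I : Ideal (R3 k)) (t : ℕ) : ℕ :=
  Module.finrank k (homogeneousSubmodule (Fin 3) k t) -
    Module.finrank k ↥(Submodule.restrictScalars k I ⊓ homogeneousSubmodule (Fin 3) k t)

/-- Regularity of a zero-dimensional scheme: least `t > 0` with `Δ h_{R/I}(t) = 0`. -/
def regC (I : Ideal (R3 k)) : ℕ := sInf {t | 0 < t ∧ hilb I t = hilb I (t - 1)}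

/-- Two representatives give the same projective point. -/
def SameProj (p q : Fin 3 → k) : Prop := ∃ c : k, c ≠ 0 ∧ q = c • p

/-- A finite set of representatives of distinct points of `ℙ²`. -/
def GoodPoints (X : Finset (Fin 3 → k)) : Prop :=
  (∀ p ∈ X, p ≠ 0) ∧ ∀ p ∈ X, ∀ q ∈ X, p ≠ q → ¬ SameProj p q

/-- The point `q` lies on the line with normal vector `ℓ`. -/
def onLine (ℓ q : Fin 3 → k) : Prop := (∑ i, ℓ i * q i) = 0

/-- `t` distinct lines, no three concurrent: each line meets the others in distinct points. -/
def GenLines (t : ℕ) (ℓ : Fin t → (Fin 3 → k)) : Prop :=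
  (∀ i, ℓ i ≠ 0) ∧ (∀ i j, i ≠ j → ¬ SameProj (ℓ i) (ℓ j)) ∧
    ∀ i j l, i ≠ j → j ≠ l → i ≠ l →
      ∀ p : Fin 3 → k, p ≠ 0 → ¬ (onLine (ℓ i) p ∧ onLine (ℓ j) p ∧ onLine (ℓ l) p)

/-- `X` is (a set of representatives of) the `t.choose 2` pairwise intersection
points of the lines `ℓ`. -/
def IsIntersectionConfig (t : ℕ) (ℓ : Fin t → (Fin 3 → k)) (X : Finset (Fin 3 → k)) : Prop :=
  GoodPoints X ∧ X.card = t.choose 2 ∧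
    (∀ p ∈ X, ∃ i j, i ≠ j ∧ onLine (ℓ i) p ∧ onLine (ℓ j) p) ∧
    (∀ i j, i ≠ j → ∃ p ∈ X, onLine (ℓ i) p ∧ onLine (ℓ j) p)

/-- The linear form with coefficient vector `a`. -/
def linForm (a : Fin 3 → k) : R3 k := ∑ i, C (a i) * X i

/-- `F` is (up to scalar) a product of `d` lines, each meeting the remaining
lines in `d-1` distinct points. -/
def IsGeneralLineUnion (d : ℕ) (F : R3 k) : Prop :=
  ∃ (c : k) (ℓ : Fin d → (Fin 3 → k)), c ≠ 0 ∧ GenLines d ℓ ∧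
    F = C c * ∏ i, linForm (ℓ i)

/-- `p` is a singular point of the curve `F`. -/
def IsSing (F : R3 k) (p : Fin 3 → k) : Prop :=
  p ≠ 0 ∧ ∀ i, eval p (pderiv i F) = 0

/-- `p` is an ordinary double point (node) of `F`: singular, and the Hessian has rank 2. -/
def IsNode (F : R3 k) (p : Fin 3 → k) : Prop :=
  IsSing F p ∧ (Matrix.of fun i j => eval p (pderiv i (pderiv j F))).rank = 2

/-- `f` is homogeneous of degree `d`. -/
def IsHomog (f : R3 k) (d : ℕ) : Prop := f ∈ homogeneousSubmodule (Fin 3) k d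

/-- `I` is a homogeneous ideal. -/
def HomogIdeal (I : Ideal (R3 k)) : Prop :=
  ∀ f ∈ I, ∀ d, homogeneousComponent d f ∈ I

/-- `I` is saturated with respect to the irrelevant maximal ideal. -/
def IsSat (I : Ideal (R3 k)) : Prop :=
  ∀ f : R3 k, (∀ i : Fin 3, X i * f ∈ I) → f ∈ I

/-- `{F, G}` is a regular sequence on `R`. -/
def RegPair (F G : R3 k) : Prop :=
  F ≠ 0 ∧ ∀ a : R3 k, G * a ∈ Ideal.span {F} → a ∈ Ideal.span {F}

/-- `J` is obtained from `I` by a basic double link `J = G·I + (F)`. -/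
def BDLStep (I J : Ideal (R3 k)) : Prop :=
  ∃ (F G : R3 k) (d1 d2 : ℕ), F ∈ I ∧ IsHomog F d1 ∧ IsHomog G d2 ∧ RegPair F G ∧
    J = Ideal.span {G} * I ⊔ Ideal.span {F}

/-- The irrelevant maximal ideal `(x₀,x₁,x₂)`. -/
def mIdeal : Ideal (R3 k) := Ideal.span {X 0, X 1, X 2}

/-- `(g, M)` is a graded free resolution `0 → ⊕ R(-d2 j) → ⊕ R(-d1 i) → I → 0`:
the `g i` are homogeneous of degree `d1 i` and generate `I`, the syzygies among the
`g i` are exactly the `R`-combinations of the columns of the homogeneous matrix `M`,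
and the columns of `M` are independent. -/
def GFRes (I : Ideal (R3 k)) {a b : ℕ} (d1 : Fin a → ℕ) (d2 : Fin b → ℕ)
    (g : Fin a → R3 k) (M : Fin a → Fin b → R3 k) : Prop :=
  (∀ i, IsHomog (g i) (d1 i)) ∧
  Ideal.span (Set.range g) = I ∧
  (∀ i j, M i j ≠ 0 → d1 i ≤ d2 j) ∧
  (∀ i j, IsHomog (M i j) (d2 j - d1 i)) ∧
  (∀ v : Fin a → R3 k, (∑ i, v i * g i = 0) ↔ ∃ c : Fin b → R3 k, ∀ i, v i = ∑ j, c j * M i j) ∧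
  (∀ c : Fin b → R3 k, (∀ i, ∑ j, c j * M i j = 0) → c = 0)

/-- The resolution with syzygy matrix `M` is minimal. -/
def MinRes {a b : ℕ} (M : Fin a → Fin b → R3 k) : Prop :=
  ∀ i j, constantCoeff (M i j) = 0

/-- A pseudo type vector `(m 0, …, m (p-1))`. -/
def IsPseudoType (p : ℕ) (m : ℕ → ℕ) : Prop :=
  (∀ i, i < p → 0 < m i) ∧ (∀ i, i + 1 < p → m i ≤ m (i + 1)) ∧
  (∀ i, i + 2 < p → m i = m (i + 1) → m (i + 1) < m (i + 2))

/-- Condition (*): between any two zero entries of `ΔT'` there is an entry `> 1`. -/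
def CondStar (p : ℕ) (m : ℕ → ℕ) : Prop :=
  ∀ i j, i + 1 < p → j + 1 < p → i < j → m i = m (i + 1) → m j = m (j + 1) →
    ∃ l, i + 2 ≤ l ∧ l ≤ j ∧ m (l - 1) + 2 ≤ m l

/-- The `i`-th summand (shifted by `p-1-i`) of the standard O-sequence of a pseudo
type vector, evaluated at `t`. -/
def sTerm (p : ℕ) (m : ℕ → ℕ) (i t : ℕ) : ℕ :=
  let prev : ℕ := if i = 0 then 0 else m (i - 1)
  let next : ℕ := if i + 1 < p then m (i + 1) else m i + 1
  let shift : ℕ := p - 1 - i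
  if m i = next then 0
  else if prev = m i then
    (if t = shift then 1 else if shift < t ∧ t < shift + m i then 2
     else if t = shift + m i then 1 else 0)
  else (if shift ≤ t ∧ t < shift + m i then 1 else 0)

/-- The standard O-sequence associated to a pseudo type vector. -/
def sOS (p : ℕ) (m : ℕ → ℕ) (t : ℕ) : ℕ := ∑ i ∈ Finset.range p, sTerm p m i t

/-- The standard Hilbert function associated to a pseudo type vector. -/
def SHF (p : ℕ) (m : ℕ → ℕ) (t : ℕ) : ℕ := ∑ j ∈ Finset.range (t + 1), sOS p m j

/-- A pseudo linear configuration of type `(m 0, …, m (p-1))` on the lines `ℓ`. -/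
def PseudoConfig (p : ℕ) (m : ℕ → ℕ) (ℓ : ℕ → (Fin 3 → k))
    (Xc : ℕ → Finset (Fin 3 → k)) : Prop :=
  (∀ i, i < p → ℓ i ≠ 0) ∧
  (∀ i j, i < p → j < p → i ≠ j → ¬ SameProj (ℓ i) (ℓ j)) ∧
  (∀ i, i < p → (Xc i).card = m i ∧ GoodPoints (Xc i)) ∧
  (∀ i, i < p → ∀ q ∈ Xc i, onLine (ℓ i) q) ∧
  (∀ i j, i < p → j < p → j ≠ i → ∀ q ∈ Xc i, ¬ onLine (ℓ j) q)

/-- The ideal of a pseudo linear configuration. -/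
def pcRad (p : ℕ) (Xc : ℕ → Finset (Fin 3 → k)) : Ideal (R3 k) :=
  ⨅ i ∈ Finset.range p, radIdeal (Xc i)

/-- A k-configuration of type `(n 0, …, n (r-1))` in `ℙ²`. -/
def KConfig (r : ℕ) (n : Fin r → ℕ) (ℓ : Fin r → (Fin 3 → k))
    (Xc : Fin r → Finset (Fin 3 → k)) : Prop :=
  (∀ i, ℓ i ≠ 0) ∧ (∀ i j, i ≠ j → ¬ SameProj (ℓ i) (ℓ j)) ∧
  (∀ i, (Xc i).card = n i ∧ GoodPoints (Xc i)) ∧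
  (∀ i, ∀ q ∈ Xc i, onLine (ℓ i) q) ∧
  (∀ i j : Fin r, j < i → ∀ q ∈ Xc j, ¬ onLine (ℓ i) q)

/-- A linear configuration of type `(n 0, …, n (r-1))` in `ℙ²`. -/
def LinearConfig (r : ℕ) (n : Fin r → ℕ) (ℓ : Fin r → (Fin 3 → k))
    (Xc : Fin r → Finset (Fin 3 → k)) : Prop :=
  (∀ i, ℓ i ≠ 0) ∧ (∀ i j, i ≠ j → ¬ SameProj (ℓ i) (ℓ j)) ∧
  (∀ i, (Xc i).card = n i ∧ GoodPoints (Xc i)) ∧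
  (∀ i, ∀ q ∈ Xc i, onLine (ℓ i) q) ∧
  (∀ i j, j ≠ i → ∀ q ∈ Xc i, ¬ onLine (ℓ j) q)

/-- The ideal of (the union of the points of) a configuration given by groups. -/
def lcRad {r : ℕ} (Xc : Fin r → Finset (Fin 3 → k)) : Ideal (R3 k) :=
  ⨅ i, radIdeal (Xc i)

/-- The ideal of the double points supported on a configuration given by groups. -/
def lcDbl {r : ℕ} (Xc : Fin r → Finset (Fin 3 → k)) : Ideal (R3 k) :=
  ⨅ i, dblIdeal (Xc i)

/-- Hilbert function of `d` points on a line (with value `0` in negative degrees). -/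
def hl (d : ℕ) (j : ℤ) : ℕ := if j < 0 then 0 else min (j.toNat + 1) d

/-- The Hilbert function associated to a 2-type vector `(n 0 < … < n (r-1))`:
`h(j) = h_r(j) + h_{r-1}(j-1) + ⋯ + h_1(j-(r-1))`. -/
def hT (r : ℕ) (n : Fin r → ℕ) (j : ℕ) : ℕ :=
  ∑ i : Fin r, hl (n i) ((j : ℤ) - ((r - 1 - (i : ℕ) : ℕ) : ℤ))

/-- The associated pseudo type vector of a 2-type vector, as a sorted list:
`(n₁, 2n₁, …, n_r, 2n_r)` in nondecreasing order. -/
def assocList (r : ℕ) (n : Fin r → ℕ) : List ℕ :=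
  List.insertionSort (· ≤ ·) (List.ofFn n ++ List.ofFn fun i => 2 * n i)

/-- The associated pseudo type vector as a function. -/
def assocPTV (r : ℕ) (n : Fin r → ℕ) : ℕ → ℕ := fun j => (assocList r n).getD j 0


/-! Evaluating forms of degree `j` at the points of `C_t` is a linear map whose rank is the
Hilbert function in degree `j`. For `p = λ_a ∩ λ_b`, the product of the other `t - 2` lines
vanishes on `C_t ∖ {p}` but not at `p`, so evaluation is surjective in every degree `≥ t - 2`.
As `dim R_{t-2} = binomial(t, 2) = |C_t|`, it is also injective in degree `t - 2`, hence in every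
lower degree (multiply by a power of `x₀`). -/

namespace MvPolynomial

variable {σ R : Type*}

instance [CommSemiring R] [Finite σ] (n : ℕ) : Module.Finite R (homogeneousSubmodule σ R n) :=
  Module.Finite.iff_fg.mpr (homogeneousSubmodule_fg σ R n)

theorem finrank_homogeneousSubmodule [CommRing R] [Nontrivial R] [Fintype σ] [DecidableEq σ]
    (n : ℕ) :
    Module.finrank R (homogeneousSubmodule σ R n) = (Fintype.card σ + n - 1).choose n := by
  let e : {d : σ →₀ ℕ | d.degree = n} ≃ Sym σ n :=
    (Equiv.subtypeEquivRight fun _ => Iff.rfl).trans (Sym.equivNatSum σ n).symm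
  have := Fintype.ofEquiv _ e.symm
  rw [homogeneousSubmodule_eq_finsupp_supported, ← Sym.card_sym_eq_choose, ← Fintype.card_congr e]
  exact Module.finrank_eq_card_basis (basisRestrictSupport R _)

theorem IsHomogeneous.eval_smul [CommSemiring R] [Fintype σ] {f : MvPolynomial σ R} {n : ℕ}
    (hf : f.IsHomogeneous n) (c : R) (x : σ → R) :
    eval (c • x) f = c ^ n * eval x f := by
  rw [eval_eq', eval_eq', Finset.mul_sum]
  refine Finset.sum_congr rfl fun d hd => ?_
  have hdeg : ∑ i, d i = n := by
    rw [← hf (mem_support_iff.mp hd), Finsupp.weight_apply, Finsupp.sum_fintype _ _ (by simp)]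
    simp
  simp only [Pi.smul_apply, smul_eq_mul, mul_pow, Finset.prod_mul_distrib,
    Finset.prod_pow_eq_pow_sum, hdeg]
  ring

end MvPolynomial

theorem finrank_homogeneousSubmodule_fin_three (n : ℕ) :
    Module.finrank k (homogeneousSubmodule (Fin 3) k n) = (n + 2).choose 2 := by
  rw [finrank_homogeneousSubmodule, Fintype.card_fin, show 3 + n - 1 = n + 2 by omega,
    Nat.choose_symm_add]

theorem mem_radIdeal_iff {S : Finset (Fin 3 → k)} {f : R3 k} {d : ℕ} (hf : f.IsHomogeneous d) :
    f ∈ radIdeal S ↔ ∀ p ∈ S, eval p f = 0 := by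
  simp only [radIdeal, Ideal.mem_iInf]
  refine ⟨fun h p hp => h p hp p ⟨1, (one_smul k p).symm⟩, ?_⟩
  rintro h p hp x ⟨c, rfl⟩
  rw [hf.eval_smul, h p hp, mul_zero]

def evalOn (S : Finset (Fin 3 → k)) (j : ℕ) :
    homogeneousSubmodule (Fin 3) k j →ₗ[k] (S → k) where
  toFun f p := eval p.1 f.1
  map_add' f g := by funext p; simp
  map_smul' c f := by funext p; simp [smul_eval]

theorem restrictScalars_radIdeal_inf_eq_map_ker (S : Finset (Fin 3 → k)) (j : ℕ) :
    Submodule.restrictScalars k (radIdeal S) ⊓ homogeneousSubmodule (Fin 3) k j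
      = (LinearMap.ker (evalOn S j)).map (homogeneousSubmodule (Fin 3) k j).subtype := by
  ext f
  simp only [Submodule.mem_inf, Submodule.restrictScalars_mem, Submodule.mem_map,
    LinearMap.mem_ker, Submodule.coe_subtype]
  constructor
  · rintro ⟨hfI, hf⟩
    exact ⟨⟨f, hf⟩, funext fun p => (mem_radIdeal_iff hf).mp hfI p.1 p.2, rfl⟩
  · rintro ⟨⟨g, hg⟩, hker, rfl⟩
    exact ⟨(mem_radIdeal_iff hg).mpr fun p hp => congrFun hker ⟨p, hp⟩, hg⟩

theorem hilb_radIdeal_eq_finrank_range (S : Finset (Fin 3 → k)) (j : ℕ) :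
    hilb (radIdeal S) j = Module.finrank k (LinearMap.range (evalOn S j)) := by
  rw [hilb, restrictScalars_radIdeal_inf_eq_map_ker, Submodule.finrank_map_subtype_eq,
    ← LinearMap.finrank_range_add_finrank_ker (evalOn S j), Nat.add_sub_cancel]

theorem evalOn_injective_iff {S : Finset (Fin 3 → k)} {j : ℕ} :
    Function.Injective (evalOn S j) ↔
      ∀ f : R3 k, f.IsHomogeneous j → (∀ p ∈ S, eval p f = 0) → f = 0 := by
  rw [injective_iff_map_eq_zero]
  refine ⟨fun h f hf hS => congrArg Subtype.val (h ⟨f, hf⟩ (funext fun p => hS p.1 p.2)),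
    fun h f hf => Subtype.ext (h f.1 f.2 fun p hp => congrFun hf ⟨p, hp⟩)⟩

theorem evalOn_injective_of_le {S : Finset (Fin 3 → k)} {j d : ℕ} (hjd : j ≤ d)
    (hd : Function.Injective (evalOn S d)) : Function.Injective (evalOn S j) := by
  rw [evalOn_injective_iff] at hd ⊢
  intro f hf hS
  have hX : (X 0 ^ (d - j) * f).IsHomogeneous d := by
    simpa [Nat.sub_add_cancel hjd] using (isHomogeneous_X_pow (R := k) 0 (d - j)).mul hf
  have := hd _ hX fun p hp => by rw [eval_mul, hS p hp, mul_zero]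
  simpa [X_ne_zero] using this

def IsSeparator (S : Finset (Fin 3 → k)) (j : ℕ) (p : Fin 3 → k) (f : R3 k) : Prop :=
  f.IsHomogeneous j ∧ eval p f ≠ 0 ∧ ∀ q ∈ S, q ≠ p → eval q f = 0

theorem IsSeparator.X_pow_mul {S : Finset (Fin 3 → k)} {d : ℕ} {p : Fin 3 → k} {f : R3 k}
    (hf : IsSeparator S d p f) {m : Fin 3} (hm : p m ≠ 0) (e : ℕ) :
    IsSeparator S (e + d) p (X m ^ e * f) :=
  ⟨(isHomogeneous_X_pow m e).mul hf.1, by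
    rw [eval_mul, eval_pow, eval_X]; exact mul_ne_zero (pow_ne_zero e hm) hf.2.1,
    fun q hq hqp => by simp [hf.2.2 q hq hqp]⟩

theorem evalOn_surjective_of_isSeparator {S : Finset (Fin 3 → k)} {j : ℕ}
    (hS : ∀ p ∈ S, ∃ f, IsSeparator S j p f) : Function.Surjective (evalOn S j) := by
  classical
  rw [← LinearMap.range_eq_top, eq_top_iff, ← (Pi.basisFun k S).span_eq, Submodule.span_le]
  rintro _ ⟨p, rfl⟩
  obtain ⟨f, hf, hfp, hfq⟩ := hS p.1 p.2
  refine ⟨(eval p.1 f)⁻¹ • ⟨f, hf⟩, funext fun q => ?_⟩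
  rcases eq_or_ne q p with rfl | hqp
  · simp [evalOn, hfp]
  · simp [evalOn, hqp, hfq q.1 q.2 (Subtype.coe_ne_coe.mpr hqp)]

theorem eval_linForm (a x : Fin 3 → k) : eval x (linForm a) = a ⬝ᵥ x := by
  simp [linForm, dotProduct]

theorem isHomogeneous_linForm (a : Fin 3 → k) : (linForm a).IsHomogeneous 1 :=
  IsHomogeneous.sum _ _ _ fun _ _ => isHomogeneous_C_mul_X _ _

theorem exists_smul_crossProduct_eq_of_dotProduct_eq_zero {a b x : Fin 3 → k}
    (hab : crossProduct a b ≠ 0) (ha : a ⬝ᵥ x = 0) (hb : b ⬝ᵥ x = 0) :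
    ∃ c : k, c • crossProduct a b = x := by
  have hcross : crossProduct (crossProduct a b) x = 0 := by
    rw [cross_cross_eq_smul_sub_smul, ha, hb, zero_smul, zero_smul, sub_zero]
  by_contra! h
  exact crossProduct_ne_zero_iff_linearIndependent.mpr
    ((LinearIndependent.pair_iff' hab).mpr h) hcross

theorem sameProj_of_onLine {a b p q : Fin 3 → k} (hab : ¬ SameProj a b) (ha : a ≠ 0)
    (hb : b ≠ 0) (hp : p ≠ 0) (hq : q ≠ 0)
    (hap : onLine a p) (hbp : onLine b p) (haq : onLine a q) (hbq : onLine b q) :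
    SameProj p q := by
  have hcross : crossProduct a b ≠ 0 := by
    refine crossProduct_ne_zero_iff_linearIndependent.mpr
      ((LinearIndependent.pair_iff' ha).mpr fun c hc => ?_)
    rcases eq_or_ne c 0 with rfl | hc0
    · exact hb (by simpa using hc.symm)
    · exact hab ⟨c, hc0, hc.symm⟩
  obtain ⟨cp, rfl⟩ := exists_smul_crossProduct_eq_of_dotProduct_eq_zero hcross hap hbp
  obtain ⟨cq, rfl⟩ := exists_smul_crossProduct_eq_of_dotProduct_eq_zero hcross haq hbq
  have hcp : cp ≠ 0 := by rintro rfl; simp at hp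
  have hcq : cq ≠ 0 := by rintro rfl; simp at hq
  exact ⟨cq / cp, div_ne_zero hcq hcp, by rw [smul_smul, div_mul_cancel₀ _ hcp]⟩

theorem isSeparator_prod_linForm {t : ℕ} {ℓ : Fin t → (Fin 3 → k)} (hℓ : GenLines t ℓ)
    {Ct : Finset (Fin 3 → k)} (hC : IsIntersectionConfig t ℓ Ct) {i₀ j₀ : Fin t}
    (hij : i₀ ≠ j₀) {p : Fin 3 → k} (hp : p ∈ Ct) (hpi : onLine (ℓ i₀) p) (hpj : onLine (ℓ j₀) p) :
    IsSeparator Ct (t - 2) p (∏ a ∈ (Finset.univ.erase i₀).erase j₀, linForm (ℓ a)) := by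
  have hp0 : p ≠ 0 := hC.1.1 p hp
  refine ⟨?_, ?_, fun q hq hqp => ?_⟩
  · have hcard : ((Finset.univ.erase i₀).erase j₀).card = t - 2 := by
      rw [Finset.card_erase_of_mem (by simpa using hij.symm), Finset.card_erase_of_mem
        (Finset.mem_univ _), Finset.card_univ, Fintype.card_fin, Nat.sub_sub]
    simpa [hcard] using IsHomogeneous.prod ((Finset.univ.erase i₀).erase j₀) _ (fun _ => 1)
      fun a _ => isHomogeneous_linForm (ℓ a)
  · rw [map_prod, Finset.prod_ne_zero_iff]
    intro a ha hzero
    simp only [Finset.mem_erase, Finset.mem_univ, and_true] at ha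
    rw [eval_linForm] at hzero
    exact hℓ.2.2 a i₀ j₀ ha.2 hij ha.1 p hp0 ⟨hzero, hpi, hpj⟩
  · obtain ⟨a, b, hab, hqa, hqb⟩ := hC.2.2.1 q hq
    rw [map_prod]
    by_contra hne
    have hoff : ∀ c, onLine (ℓ c) q → c = i₀ ∨ c = j₀ := fun c hc => by
      by_contra! h
      exact hne (Finset.prod_eq_zero (i := c) (by simp [h.1, h.2])
        (by rw [eval_linForm]; exact hc))
    have hsame : ∀ {a b}, a ≠ b → onLine (ℓ a) p → onLine (ℓ b) p → onLine (ℓ a) q →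
        onLine (ℓ b) q → False := fun hab hpa hpb hqa hqb =>
      hC.1.2 p hp q hq hqp.symm (sameProj_of_onLine (hℓ.2.1 _ _ hab) (hℓ.1 _) (hℓ.1 _)
        hp0 (hC.1.1 q hq) hpa hpb hqa hqb)
    rcases hoff a hqa with rfl | rfl <;> rcases hoff b hqb with rfl | rfl
    exacts [hab rfl, hsame hab hpi hpj hqa hqb, hsame hab hpj hpi hqa hqb, hab rfl]

theorem stmt2_general (t : ℕ) (ht : 2 ≤ t) (ℓ : Fin t → (Fin 3 → k))
    (hℓ : GenLines t ℓ) (Ct : Finset (Fin 3 → k)) (hC : IsIntersectionConfig t ℓ Ct) :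
    (∀ j, hilb (radIdeal Ct) j = min ((j + 2).choose 2) (t.choose 2)) ∧
    ¬ ∃ f : R3 k, f ≠ 0 ∧ IsHomog f (t - 2) ∧ f ∈ radIdeal Ct := by
  have hcard : Fintype.card Ct = t.choose 2 := by rw [Fintype.card_coe, hC.2.1]
  have hsurj : ∀ j, t - 2 ≤ j → Function.Surjective (evalOn Ct j) := by
    intro j hj
    refine evalOn_surjective_of_isSeparator fun p hp => ?_
    obtain ⟨i₀, j₀, hij, hpi, hpj⟩ := hC.2.2.1 p hp
    obtain ⟨m, hm⟩ := Function.ne_iff.mp (hC.1.1 p hp)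
    have hf := (isSeparator_prod_linForm hℓ hC hij hp hpi hpj).X_pow_mul hm (j - (t - 2))
    exact ⟨_, Nat.sub_add_cancel hj ▸ hf⟩
  have hinj : ∀ j, j ≤ t - 2 → Function.Injective (evalOn Ct j) := fun j hj =>
    evalOn_injective_of_le hj <| (LinearMap.injective_iff_surjective_of_finrank_eq_finrank
      (by rw [finrank_homogeneousSubmodule_fin_three, Module.finrank_fintype_fun_eq_card,
        hcard, Nat.sub_add_cancel ht])).mpr (hsurj _ le_rfl)
  refine ⟨fun j => ?_, fun ⟨f, hf0, hf, hfI⟩ =>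
    hf0 (evalOn_injective_iff.mp (hinj _ le_rfl) f hf ((mem_radIdeal_iff hf).mp hfI))⟩
  rw [hilb_radIdeal_eq_finrank_range]
  rcases le_total (t - 2) j with hj | hj
  · rw [LinearMap.range_eq_top.mpr (hsurj j hj), finrank_top, Module.finrank_fintype_fun_eq_card,
      hcard, min_eq_right (Nat.choose_le_choose 2 (by omega))]
  · rw [LinearMap.finrank_range_of_inj (hinj j hj), finrank_homogeneousSubmodule_fin_three,
      min_eq_left (Nat.choose_le_choose 2 (by omega))]

/-- the intersection configuration `C_t` of `t` general-position lines has
Hilbert function with first difference `(1,2,…,t-1)`, i.e. the generic Hilbert function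
of `t.choose 2` points; in particular it lies on no curve of degree `t-2`. -/
theorem stmt2 [CharZero k] (t : ℕ) (ht : 2 ≤ t) (ℓ : Fin t → (Fin 3 → k))
    (hℓ : GenLines t ℓ) (Ct : Finset (Fin 3 → k)) (hC : IsIntersectionConfig t ℓ Ct) :
    (∀ j, hilb (radIdeal Ct) j = min ((j + 2).choose 2) (t.choose 2)) ∧
    ¬ ∃ f : R3 k, f ≠ 0 ∧ IsHomog f (t - 2) ∧ f ∈ radIdeal Ct :=
  stmt2_general t ht ℓ hℓ Ct hC

end
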